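/- Let 0 < ω < 2 and let f, g ∈ PW_ω(ℤ) satisfy f(j) + f(j+1) = g(j) + g(j+1) for every even integer j. Then f = g. -/

import Mathlib

open MeasureTheory Real Set

/-- `f : ℤ → ℂ` belongs to the Paley–Wiener space `PW_ω(ℤ)`: it is square-summable
and the `L²` function `F` on `[−π, π)` whose Fourier coefficients are `f` (the image
of `f` under the Fourier–Plancherel unitary) vanishes a.e. on the set where
`4·sin²(ξ/2) > ω`. -/
def IsPaleyWienerZ (ω : ℝ) (f : ℤ → ℂ) : Prop :=
  Summable (fun k : ℤ => ‖f k‖ ^ 2) ∧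
  ∃ F : ℝ → ℂ,
    MemLp F 2 (volume.restrict (Ico (-π) π)) ∧
    (∀ᵐ ξ ∂(volume.restrict (Ico (-π) π)), ω < 4 * Real.sin (ξ / 2) ^ 2 → F ξ = 0) ∧
    ∀ k : ℤ, f k = ((1 / (2 * π) : ℝ) : ℂ) *
      ∫ ξ in Ico (-π) π, F ξ * Complex.exp (-(Complex.I * (k : ℂ) * (ξ : ℂ)))

/-! Let `H` be the function on `(-π, π]` whose Fourier coefficients are `f - g`. Since `ω < 2`,
`H` vanishes outside `(-π/2, π/2)`, and the hypothesis says that `W(ξ) = (1 + e^{-iξ}) H(ξ)` has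
vanishing even Fourier coefficients. As `W` is supported in an interval of length `π`, its even
coefficients for the period `2π` are its coefficients for the period `π`, so `W = 0` by
Parseval; finally `1 + e^{-iξ} ≠ 0` on `(-π/2, π/2)`. -/

open scoped ENNReal

lemma MeasureTheory.MemLp.intervalIntegrable {E : Type*} [NormedAddCommGroup E] {f : ℝ → E}
    {p : ℝ≥0∞} {a b : ℝ} (hp : 1 ≤ p) (hab : a ≤ b)
    (hf : MemLp f p (volume.restrict (Ioc a b))) : IntervalIntegrable f volume a b :=
  (intervalIntegrable_iff_integrableOn_Ioc_of_le hab).2 (hf.integrable hp)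

section FourierCoeffOn

variable {E : Type*} [NormedAddCommGroup E] [NormedSpace ℂ E] {a b c d : ℝ}

lemma IntervalIntegrable.fourier_smul {f : ℝ → E} (hf : IntervalIntegrable f volume a b) (n : ℤ) :
    IntervalIntegrable (fun x => fourier n (x : AddCircle (b - a)) • f x) volume a b :=
  hf.continuousOn_smul ((fourier n).continuous.comp (AddCircle.continuous_mk' _)).continuousOn

lemma fourierCoeffOn_add (hab : a < b) {f g : ℝ → E} (hf : IntervalIntegrable f volume a b)
    (hg : IntervalIntegrable g volume a b) (n : ℤ) :
    fourierCoeffOn hab (f + g) n = fourierCoeffOn hab f n + fourierCoeffOn hab g n := by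
  simp only [fourierCoeffOn_eq_integral, Pi.add_apply, smul_add]
  rw [intervalIntegral.integral_add (hf.fourier_smul _) (hg.fourier_smul _), smul_add]

lemma fourierCoeffOn_sub (hab : a < b) {f g : ℝ → E} (hf : IntervalIntegrable f volume a b)
    (hg : IntervalIntegrable g volume a b) (n : ℤ) :
    fourierCoeffOn hab (f - g) n = fourierCoeffOn hab f n - fourierCoeffOn hab g n := by
  simp only [fourierCoeffOn_eq_integral, Pi.sub_apply, smul_sub]
  rw [intervalIntegral.integral_sub (hf.fourier_smul _) (hg.fourier_smul _), smul_sub]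

lemma fourierCoeffOn_fourier_smul (hab : a < b) (f : ℝ → E) (k m : ℤ) :
    fourierCoeffOn hab (fun x => fourier (-k) (x : AddCircle (b - a)) • f x) m =
      fourierCoeffOn hab f (m + k) := by
  simp only [fourierCoeffOn_eq_integral, smul_smul, ← fourier_add, neg_add]

lemma fourierCoeffOn_eq_two_smul_fourierCoeffOn_two_mul (hab : a < b) (hcd : c < d)
    (hlen : b - a = 2 * (d - c)) (hsub : Ioc c d ⊆ Ioc a b) {K : ℝ → E}
    (hK : ∀ᵐ x ∂volume.restrict (Ioc a b), x ∉ Ioc c d → K x = 0) (n : ℤ) :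
    fourierCoeffOn hcd K n = (2 : ℝ) • fourierCoeffOn hab K (2 * n) := by
  have hfourier (x : ℝ) :
      fourier (-(2 * n)) (x : AddCircle (b - a)) = fourier (-n) (x : AddCircle (d - c)) := by
    rw [fourier_coe_apply, fourier_coe_apply, hlen]
    congr 1
    have : ((d - c : ℝ) : ℂ) ≠ 0 := by exact_mod_cast (sub_pos.2 hcd).ne'
    push_cast
    field_simp
  rw [fourierCoeffOn_eq_integral, fourierCoeffOn_eq_integral,
    intervalIntegral.integral_of_le hab.le, intervalIntegral.integral_of_le hcd.le,
    setIntegral_eq_of_subset_of_ae_sdiff_eq_zero measurableSet_Ioc.nullMeasurableSet hsub]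
  · simp only [hfourier]
    rw [hlen, smul_smul]
    congr 1
    field_simp
  · filter_upwards [(ae_restrict_iff' measurableSet_Ioc).1 hK] with x hx hxs
    rw [hx hxs.1 hxs.2, smul_zero]

lemma ae_eq_zero_of_fourierCoeffOn_eq_zero (hab : a < b) {f : ℝ → ℂ}
    (hf : MemLp f 2 (volume.restrict (Ioc a b))) (h : ∀ n, fourierCoeffOn hab f n = 0) :
    f =ᵐ[volume.restrict (Ioc a b)] 0 := by
  have hparseval := hasSum_sq_fourierCoeffOn hab hf
  simp only [h, norm_zero, zero_pow two_ne_zero] at hparseval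
  have hnorm : ∫ x in Ioc a b, ‖f x‖ ^ 2 = 0 := by
    simpa [(sub_pos.2 hab).ne', intervalIntegral.integral_of_le hab.le]
      using hasSum_zero.unique hparseval
  rw [integral_eq_zero_iff_of_nonneg (fun x => by positivity)
    (hf.integrable_norm_pow two_ne_zero)] at hnorm
  filter_upwards [hnorm] with x hx
  simpa using hx

lemma ae_eq_zero_of_fourierCoeffOn_two_mul_eq_zero (hab : a < b) (hcd : c < d)
    (hlen : b - a = 2 * (d - c)) (hsub : Ioc c d ⊆ Ioc a b) {K : ℝ → ℂ}
    (hK2 : MemLp K 2 (volume.restrict (Ioc a b)))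
    (hK : ∀ᵐ x ∂volume.restrict (Ioc a b), x ∉ Ioc c d → K x = 0)
    (h : ∀ n, fourierCoeffOn hab K (2 * n) = 0) :
    K =ᵐ[volume.restrict (Ioc a b)] 0 := by
  have hKcd : K =ᵐ[volume.restrict (Ioc c d)] 0 :=
    ae_eq_zero_of_fourierCoeffOn_eq_zero hcd (hK2.mono_measure (Measure.restrict_mono hsub le_rfl))
      fun n => by
        rw [fourierCoeffOn_eq_two_smul_fourierCoeffOn_two_mul hab hcd hlen hsub hK, h, smul_zero]
  filter_upwards [hK, ae_restrict_of_ae ((ae_restrict_iff' measurableSet_Ioc).1 hKcd)]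
    with x hout hin
  by_cases hx : x ∈ Ioc c d
  · exact hin hx
  · exact hout hx

end FourierCoeffOn

lemma neg_pi_lt_pi : -π < π := neg_lt_self pi_pos

lemma two_le_four_mul_sin_half_sq {ξ : ℝ} (hξ : ξ ∈ Icc (-π) π)
    (hξ' : ξ ∉ Ioo (-(π / 2)) (π / 2)) : 2 ≤ 4 * sin (ξ / 2) ^ 2 := by
  have hcos : cos ξ ≤ 0 := by
    rw [← cos_abs]
    refine cos_nonpos_of_pi_div_two_le_of_le ?_ (by linarith [abs_le.2 hξ, pi_pos])
    by_contra! hlt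
    exact hξ' ⟨by linarith [neg_abs_le ξ], by linarith [le_abs_self ξ]⟩
  have hhalf : cos ξ = 1 - 2 * sin (ξ / 2) ^ 2 := by
    rw [← cos_two_mul_eq_one_sub, mul_div_cancel₀ ξ two_ne_zero]
  linarith

lemma one_add_fourier_neg_one_ne_zero {x : ℝ} (hx : x ∈ Ioo (-(π / 2)) (π / 2)) :
    1 + fourier (-1) (x : AddCircle (π - -π)) ≠ 0 := by
  have hre : (fourier (-1) (x : AddCircle (π - -π)) : ℂ).re = cos x := by
    rw [fourier_coe_apply, show 2 * π * Complex.I * ((-1 : ℤ) : ℂ) * x / ((π - -π : ℝ) : ℂ)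
      = ((-x : ℝ) : ℂ) * Complex.I by push_cast; field_simp; ring,
      Complex.exp_ofReal_mul_I_re, cos_neg]
  intro h0
  have := congrArg Complex.re h0
  rw [Complex.add_re, hre, Complex.one_re, Complex.zero_re] at this
  linarith [cos_pos_of_mem_Ioo hx]

lemma IsPaleyWienerZ.exists_fourierCoeffOn {ω : ℝ} (hω : ω < 2) {f : ℤ → ℂ}
    (hf : IsPaleyWienerZ ω f) :
    ∃ F : ℝ → ℂ, MemLp F 2 (volume.restrict (Ioc (-π) π)) ∧
      (∀ᵐ ξ ∂volume.restrict (Ioc (-π) π), ξ ∉ Ioo (-(π / 2)) (π / 2) → F ξ = 0) ∧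
      f = fourierCoeffOn neg_pi_lt_pi F := by
  obtain ⟨-, F, hF2, hFsupp, hFcoeff⟩ := hf
  rw [restrict_Ico_eq_restrict_Ioc] at hF2 hFsupp
  refine ⟨F, hF2, ?_, funext fun k => ?_⟩
  · filter_upwards [hFsupp, ae_restrict_mem measurableSet_Ioc] with ξ hξ hmem hout
    exact hξ (hω.trans_le (two_le_four_mul_sin_half_sq (Ioc_subset_Icc_self hmem) hout))
  · rw [hFcoeff k, fourierCoeffOn_eq_integral, intervalIntegral.integral_of_le neg_pi_lt_pi.le,
      restrict_Ico_eq_restrict_Ioc, Complex.real_smul]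
    congr 1
    · push_cast
      ring
    · congr 1 with ξ
      rw [fourier_coe_apply, smul_eq_mul, mul_comm]
      congr 2
      push_cast
      field_simp
      ring

lemma ae_eq_zero_of_fourierCoeffOn_two_mul_add_eq_zero {H : ℝ → ℂ}
    (hH2 : MemLp H 2 (volume.restrict (Ioc (-π) π)))
    (hH : ∀ᵐ ξ ∂volume.restrict (Ioc (-π) π), ξ ∉ Ioo (-(π / 2)) (π / 2) → H ξ = 0)
    (h : ∀ n : ℤ, fourierCoeffOn neg_pi_lt_pi H (2 * n) +
      fourierCoeffOn neg_pi_lt_pi H (2 * n + 1) = 0) :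
    H =ᵐ[volume.restrict (Ioc (-π) π)] 0 := by
  set e : ℝ → ℂ := fun x => fourier (-1) (x : AddCircle (π - -π))
  have he : Continuous e := (fourier (-1)).continuous.comp (AddCircle.continuous_mk' _)
  have hH1 : IntervalIntegrable H volume (-π) π :=
    hH2.intervalIntegrable one_le_two neg_pi_lt_pi.le
  have heH2 : MemLp (e • H) 2 (volume.restrict (Ioc (-π) π)) :=
    hH2.of_le (he.aestronglyMeasurable.smul hH2.1)
      (ae_of_all _ fun x => by simp [e, Circle.norm_coe])
  have hW : ∀ n : ℤ, fourierCoeffOn neg_pi_lt_pi (H + e • H) (2 * n) = 0 := fun n => by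
    have hshift : fourierCoeffOn neg_pi_lt_pi (e • H) (2 * n) =
        fourierCoeffOn neg_pi_lt_pi H (2 * n + 1) :=
      fourierCoeffOn_fourier_smul neg_pi_lt_pi H 1 (2 * n)
    rw [fourierCoeffOn_add (g := e • H) _ hH1 (hH1.fourier_smul (-1)), hshift, h n]
  have hWsupp : ∀ᵐ ξ ∂volume.restrict (Ioc (-π) π), ξ ∉ Ioc (-(π / 2)) (π / 2) →
      (H + e • H) ξ = 0 := by
    filter_upwards [hH] with ξ hξ hout
    simp [hξ fun hin => hout (Ioo_subset_Ioc_self hin)]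
  have hW0 := ae_eq_zero_of_fourierCoeffOn_two_mul_eq_zero neg_pi_lt_pi
    (by linarith [pi_pos] : -(π / 2) < π / 2) (by ring)
    (Ioc_subset_Ioc (by linarith [pi_pos]) (by linarith [pi_pos])) (hH2.add heH2) hWsupp hW
  filter_upwards [hH, hW0] with ξ hout hξ
  by_cases hin : ξ ∈ Ioo (-(π / 2)) (π / 2)
  · have : (1 + e ξ) * H ξ = 0 := by simpa [e, add_mul] using hξ
    exact (mul_eq_zero.1 this).resolve_left (one_add_fourier_neg_one_ne_zero hin)
  · exact hout hin

theorem stmt_18_general (ω : ℝ) (hω2 : ω < 2) (f g : ℤ → ℂ)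
    (hf : IsPaleyWienerZ ω f) (hg : IsPaleyWienerZ ω g)
    (h : ∀ j : ℤ, Even j → f j + f (j + 1) = g j + g (j + 1)) :
    f = g := by
  obtain ⟨F, hF2, hFsupp, rfl⟩ := hf.exists_fourierCoeffOn hω2
  obtain ⟨G, hG2, hGsupp, rfl⟩ := hg.exists_fourierCoeffOn hω2
  have hsub := fourierCoeffOn_sub neg_pi_lt_pi (hF2.intervalIntegrable one_le_two neg_pi_lt_pi.le)
    (hG2.intervalIntegrable one_le_two neg_pi_lt_pi.le)
  have hH : F - G =ᵐ[volume.restrict (Ioc (-π) π)] 0 := by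
    refine ae_eq_zero_of_fourierCoeffOn_two_mul_add_eq_zero (hF2.sub hG2) ?_ fun n => ?_
    · filter_upwards [hFsupp, hGsupp] with ξ hF hG hout
      simp [hF hout, hG hout]
    · rw [hsub, hsub]
      linear_combination h (2 * n) (even_two_mul n)
  funext k
  rw [← sub_eq_zero, ← hsub, fourierCoeffOn_congr_ae _ hH]
  simp [fourierCoeffOn_eq_integral]

/-- Let `0 < ω < 2` and let `f, g ∈ PW_ω(ℤ)` satisfy
`f(j) + f(j+1) = g(j) + g(j+1)` for every even integer `j`.  Then `f = g`. -/
theorem stmt_18 (ω : ℝ) (hω0 : 0 < ω) (hω2 : ω < 2) (f g : ℤ → ℂ)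
    (hf : IsPaleyWienerZ ω f) (hg : IsPaleyWienerZ ω g)
    (h : ∀ j : ℤ, Even j → f j + f (j + 1) = g j + g (j + 1)) :
    f = g :=
  stmt_18_general ω hω2 f g hf hg h
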